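/- Let G₁ be a restricted frame graph, let G₂ be a chandelier with pivot p, and let v be a vertex of G₁. Then the graph obtained from the disjoint union of G₁ and G₂ by identifying v with p is a restricted frame graph. -/

import Mathlib

/-! ## Frames and restricted frame graphs -/

/-- An axis-parallel box in `ℝ²`, i.e. a product `[x1,x2] × [y1,y2]` of two closed
nondegenerate intervals. -/
structure Box : Type where
  x1 : ℝ
  x2 : ℝ
  y1 : ℝ
  y2 : ℝ
  hx : x1 < x2
  hy : y1 < y2

namespace Box

/-- The region bounded by the frame of a box: the closed box itself. -/
def region (B : Box) : Set (ℝ × ℝ) :=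
  {p : ℝ × ℝ | B.x1 ≤ p.1 ∧ p.1 ≤ B.x2 ∧ B.y1 ≤ p.2 ∧ p.2 ≤ B.y2}

/-- The frame of a box: the topological boundary of the closed box. -/
def frame (B : Box) : Set (ℝ × ℝ) :=
  {p : ℝ × ℝ | p ∈ B.region ∧ (p.1 = B.x1 ∨ p.1 = B.x2 ∨ p.2 = B.y1 ∨ p.2 = B.y2)}

/-- The left side `{x1} × [y1,y2]` of a frame. -/
def leftSide (B : Box) : Set (ℝ × ℝ) :=
  {p : ℝ × ℝ | p.1 = B.x1 ∧ B.y1 ≤ p.2 ∧ p.2 ≤ B.y2}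

/-- The right side `{x2} × [y1,y2]` of a frame. -/
def rightSide (B : Box) : Set (ℝ × ℝ) :=
  {p : ℝ × ℝ | p.1 = B.x2 ∧ B.y1 ≤ p.2 ∧ p.2 ≤ B.y2}

/-- The top side `[x1,x2] × {y2}` of a frame. -/
def topSide (B : Box) : Set (ℝ × ℝ) :=
  {p : ℝ × ℝ | p.2 = B.y2 ∧ B.x1 ≤ p.1 ∧ p.1 ≤ B.x2}

/-- The bottom side `[x1,x2] × {y1}` of a frame. -/
def bottomSide (B : Box) : Set (ℝ × ℝ) :=
  {p : ℝ × ℝ | p.2 = B.y1 ∧ B.x1 ≤ p.1 ∧ p.1 ≤ B.x2}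

/-- The four corners of a frame. -/
def corners (B : Box) : Set (ℝ × ℝ) :=
  {(B.x1, B.y1), (B.x1, B.y2), (B.x2, B.y1), (B.x2, B.y2)}

/-- `Box.Inside inner outer` : the frame of `outer` contains the frame of `inner`,
i.e. the two frames are disjoint and the frame of `inner` is contained in the region
bounded by the frame of `outer`. -/
def Inside (inner outer : Box) : Prop :=
  inner.frame ∩ outer.frame = ∅ ∧ inner.frame ⊆ outer.region

/-- `Box.Outside B outer` : the frames are disjoint and `B` is not inside `outer`. -/
def Outside (B outer : Box) : Prop :=
  B.frame ∩ outer.frame = ∅ ∧ ¬ Inside B outer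

end Box

/-- A family of frames `(F v)` is a representation of the graph `G` as a restricted
frame graph: distinct vertices are adjacent iff their frames intersect, and the four
restrictions on the representation hold. -/
structure IsFrameRepresentation {V : Type} (G : SimpleGraph V) (F : V → Box) : Prop where
  /-- Distinct vertices are adjacent iff their frames intersect. -/
  adj_iff : ∀ u v : V, u ≠ v → (G.Adj u v ↔ ((F u).frame ∩ (F v).frame).Nonempty)
  /-- (1) Corners of a frame do not coincide with any point of another frame. -/
  corner_free : ∀ u v : V, u ≠ v → (F u).corners ∩ (F v).frame = ∅
  /-- (2) The left side of a frame does not intersect any other frame. -/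
  left_free : ∀ u v : V, u ≠ v → (F u).leftSide ∩ (F v).frame = ∅
  /-- (3) If the right side of a frame intersects a second frame, this right side
  intersects both the top and the bottom side of that second frame. -/
  right_cross : ∀ u v : V, u ≠ v →
    ((F u).rightSide ∩ (F v).frame).Nonempty →
    ((F u).rightSide ∩ (F v).topSide).Nonempty ∧
      ((F u).rightSide ∩ (F v).bottomSide).Nonempty
  /-- (4) If two frames intersect, no third frame is entirely contained in the
  intersection of the regions bounded by the two frames. -/
  not_nested : ∀ u v w : V, u ≠ v → w ≠ u → w ≠ v →
    ((F u).frame ∩ (F v).frame).Nonempty →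
    ¬ ((F w).frame ⊆ (F u).region ∩ (F v).region)

/-- A graph is a restricted frame graph if it admits a frame representation. -/
def IsRestrictedFrameGraph {V : Type} (G : SimpleGraph V) : Prop :=
  ∃ F : V → Box, IsFrameRepresentation G F

/-! ## Basic graph notions -/

/-- The closed neighborhood `N[u] = {u} ∪ N(u)`. -/
def closedNbhd {V : Type} (G : SimpleGraph V) (u : V) : Set V :=
  insert u (G.neighborSet u)

/-- `G` has a full star-cutset: for some vertex `u` the removal of `N[u]`
disconnects `G`. -/
def HasFullStarCutset {V : Type} (G : SimpleGraph V) : Prop :=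
  ∃ u : V, ¬ (G.induce ((closedNbhd G u)ᶜ)).Preconnected

/-- `v` is a cut-vertex of `G`: its removal disconnects `G`. -/
def IsCutVertex {V : Type} (G : SimpleGraph V) (v : V) : Prop :=
  ¬ (G.induce {u : V | u ≠ v}).Preconnected

/-- `G` is a path graph: its vertices can be enumerated `0, …, n-1` so that two
vertices are adjacent iff they are consecutive. -/
def IsPathGraph {V : Type} (G : SimpleGraph V) : Prop :=
  ∃ (n : ℕ) (e : V ≃ Fin n), ∀ u v : V,
    G.Adj u v ↔ ((e u : ℕ) + 1 = (e v : ℕ) ∨ (e v : ℕ) + 1 = (e u : ℕ))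

/-- `G` is a cycle graph (on at least 3 vertices). -/
def IsCycleGraphOn {V : Type} (G : SimpleGraph V) : Prop :=
  ∃ n : ℕ, 3 ≤ n ∧ ∃ e : V ≃ Fin n, ∀ u v : V,
    G.Adj u v ↔ (((e u : ℕ) + 1) % n = (e v : ℕ) ∨ ((e v : ℕ) + 1) % n = (e u : ℕ))

/-- `x` is a leaf of `T`: it has exactly one neighbor. -/
def IsLeaf {V : Type} (T : SimpleGraph V) (x : V) : Prop :=
  (T.neighborSet x).ncard = 1

/-- `G` is a chandelier with pivot `v`: `G - v` is a tree `T` and `v` is adjacent to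
exactly the leaves of `T`. -/
def IsChandelierWithPivot {V : Type} (G : SimpleGraph V) (v : V) : Prop :=
  (G.induce {u : V | u ≠ v}).IsTree ∧
    ∀ u : ↥{u : V | u ≠ v}, (G.Adj v u.val ↔ IsLeaf (G.induce {u : V | u ≠ v}) u)

/-- `G` is a chandelier. -/
def IsChandelier {V : Type} (G : SimpleGraph V) : Prop :=
  ∃ v : V, IsChandelierWithPivot G v

/-- `G` is a luxury chandelier: a chandelier (with pivot `v` and tree `T = G - v`)
such that the neighbor in `T` of each leaf of `T` has degree 2 in `T`. -/
def IsLuxuryChandelier {V : Type} (G : SimpleGraph V) : Prop :=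
  ∃ v : V, IsChandelierWithPivot G v ∧
    ∀ x y : ↥{u : V | u ≠ v}, (G.induce {u : V | u ≠ v}).Adj x y →
      IsLeaf (G.induce {u : V | u ≠ v}) x →
      ((G.induce {u : V | u ≠ v}).neighborSet y).ncard = 2

/-! ## Multigraphs and subdivisions -/

/-- A loopless multigraph on vertex set `V`: a symmetric multiplicity function. -/
structure Multigraph (V : Type) where
  m : V → V → ℕ
  symm : ∀ u v : V, m u v = m v u
  loopless : ∀ v : V, m v v = 0

/-- The multigraph associated with a simple graph (each edge has multiplicity 1). -/
noncomputable def SimpleGraph.toMultigraph {V : Type} (G : SimpleGraph V) : Multigraph V where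
  m u v := @ite ℕ (G.Adj u v) (Classical.dec _) 1 0
  symm u v := by
    beta_reduce
    by_cases h : G.Adj u v
    · rw [if_pos h, if_pos h.symm]
    · rw [if_neg h, if_neg (fun h' => h h'.symm)]
  loopless v := by
    beta_reduce
    rw [if_neg (show ¬ G.Adj v v from G.irrefl)]

/-- The interior (set of internal vertices) of a walk. -/
def walkInterior {V : Type} {G : SimpleGraph V} {a b : V} (p : G.Walk a b) : Set V :=
  {w : V | w ∈ p.support ∧ w ≠ a ∧ w ≠ b}

/-- A witness that the simple graph `H` is a `≥k`-subdivision of the multigraph `G`: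
each edge of `G` (counted with multiplicity) is replaced by a path with at least
`k+1` edges between (the images of) its endpoints, these paths being internally
disjoint from each other and from the branch vertices, and covering all of `H`. -/
structure MultiSubdivision {V W : Type} (G : Multigraph V) (H : SimpleGraph W) (k : ℕ) where
  /-- the embedding of branch vertices -/
  f : V ↪ W
  /-- the path replacing the `i`-th parallel edge between `u` and `v` -/
  path : ∀ u v : V, Fin (G.m u v) → H.Walk (f u) (f v)
  path_symm : ∀ (u v : V) (i : Fin (G.m u v)),
    path v u (Fin.cast (G.symm u v) i) = (path u v i).reverse
  path_ne : ∀ (u v : V) (i i' : Fin (G.m u v)), (i : ℕ) ≠ (i' : ℕ) →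
    path u v i ≠ path u v i'
  isPath : ∀ (u v : V) (i : Fin (G.m u v)), (path u v i).IsPath
  length_le : ∀ (u v : V) (i : Fin (G.m u v)), k + 1 ≤ (path u v i).length
  /-- the paths are internally disjoint from the branch vertices -/
  interior_avoid : ∀ (u v : V) (i : Fin (G.m u v)) (x : V),
    f x ∉ walkInterior (path u v i)
  /-- distinct paths are pairwise internally disjoint -/
  interior_disjoint : ∀ (u v : V) (i : Fin (G.m u v)) (u' v' : V) (i' : Fin (G.m u' v')),
    (walkInterior (path u v i) ∩ walkInterior (path u' v' i')).Nonempty →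
    (u = u' ∧ v = v' ∧ (i : ℕ) = (i' : ℕ)) ∨ (u = v' ∧ v = u' ∧ (i : ℕ) = (i' : ℕ))
  /-- every vertex of `H` is a branch vertex or an internal vertex of a path -/
  vertex_cover : ∀ w : W, (∃ x : V, f x = w) ∨
    ∃ (u v : V) (i : Fin (G.m u v)), w ∈ walkInterior (path u v i)
  /-- every edge of `H` lies on one of the paths -/
  edge_cover : ∀ e ∈ H.edgeSet, ∃ (u v : V) (i : Fin (G.m u v)), e ∈ (path u v i).edges

/-- `H` is a `≥k`-subdivision of the multigraph `G`. -/
def IsSubdivisionGE {V W : Type} (G : Multigraph V) (k : ℕ) (H : SimpleGraph W) : Prop :=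
  Nonempty (MultiSubdivision G H k)

/-- `H` is a subdivision of the simple graph `G` (every edge is replaced by a path
with at least one edge). -/
def IsSubdivision {V W : Type} (G : SimpleGraph V) (H : SimpleGraph W) : Prop :=
  IsSubdivisionGE G.toMultigraph 0 H

namespace Multigraph

/-- The underlying simple graph of a multigraph. -/
def support {V : Type} (G : Multigraph V) : SimpleGraph V where
  Adj u v := 0 < G.m u v
  symm := by
    constructor
    intro u v h
    show 0 < G.m v u
    rw [G.symm v u]
    exact h
  loopless := by
    constructor
    intro v h
    have h' : 0 < G.m v v := h
    rw [G.loopless v] at h'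
    exact Nat.lt_irrefl 0 h'

/-- A multigraph is connected if its underlying simple graph is. -/
def Connected {V : Type} (G : Multigraph V) : Prop :=
  G.support.Connected

/-- A multigraph is 2-connected if it is connected, has at least two vertices, and
deleting any single vertex leaves it connected. -/
def TwoConnected {V : Type} (G : Multigraph V) : Prop :=
  G.support.Connected ∧ (∃ u v : V, u ≠ v) ∧
    ∀ v : V, (G.support.induce {u : V | u ≠ v}).Connected

/-- `v` is a feedback vertex of the multigraph `G`: `G - v` contains no cycle
(where a pair of parallel edges forms a cycle of length 2). -/
def IsFeedbackVertex {V : Type} (G : Multigraph V) (v : V) : Prop :=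
  (G.support.induce {u : V | u ≠ v}).IsAcyclic ∧
    ∀ u w : V, u ≠ v → w ≠ v → G.m u w ≤ 1

end Multigraph

/-! ## Induced cycles and big vertices -/

/-- `C` induces a cycle in `G`. -/
def IsInducedCycle {V : Type} (G : SimpleGraph V) (C : Set V) : Prop :=
  IsCycleGraphOn (G.induce C)

/-- `v` is a big vertex of the (induced cycle on) `C` with respect to the frame
representation `F`: `v ∈ C` and `F v` contains the frame of every vertex of `C`
outside `N[v]`. -/
def IsBigVertexOf {V : Type} (G : SimpleGraph V) (F : V → Box) (C : Set V) (v : V) : Prop :=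
  v ∈ C ∧ ∀ u ∈ C, u ≠ v → ¬ G.Adj v u → Box.Inside (F u) (F v)

/-- `v` is a big vertex of the representation `F`: it is a big vertex of some
induced cycle of `G`. -/
def IsBigVertex {V : Type} (G : SimpleGraph V) (F : V → Box) (v : V) : Prop :=
  ∃ C : Set V, IsInducedCycle G C ∧ IsBigVertexOf G F C v

/-! ## Gluing a chandelier onto a vertex -/

/-- The graph obtained from the disjoint union of `G₁` and `G₂` by identifying the
vertex `v` of `G₁` with the vertex `p` of `G₂`. -/
def glueAt {V₁ V₂ : Type} (G₁ : SimpleGraph V₁) (G₂ : SimpleGraph V₂) (v : V₁) (p : V₂) :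
    SimpleGraph (V₁ ⊕ {x : V₂ // x ≠ p}) :=
  SimpleGraph.fromRel (fun a b =>
    match a, b with
    | Sum.inl u, Sum.inl w => G₁.Adj u w
    | Sum.inr u, Sum.inr w => G₂.Adj u.val w.val
    | Sum.inl u, Sum.inr w => u = v ∧ G₂.Adj p w.val
    | Sum.inr _, Sum.inl _ => False)

/-! ## The multigraphs `Ĥ₁` and `Ĥ₂` -/

/-- The multiplicity matrix of `Ĥ₁` (vertices `a₁ = 0`, `b₁ = 1`, `v₁ = 2`, `v₂ = 3`,
`a₂ = 4`, `b₂ = 5`). -/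
def H1hatMatrix : Matrix (Fin 6) (Fin 6) ℕ :=
  !![0, 2, 1, 0, 0, 0;
     2, 0, 1, 0, 0, 0;
     1, 1, 0, 1, 0, 0;
     0, 0, 1, 0, 1, 1;
     0, 0, 0, 1, 0, 2;
     0, 0, 0, 1, 2, 0]

/-- The multigraph `Ĥ₁`: two disjoint digons `a₁b₁`, `a₂b₂`, and single edges
`a₁v₁`, `b₁v₁`, `v₁v₂`, `a₂v₂`, `b₂v₂`. -/
def H1hat : Multigraph (Fin 6) where
  m u v := H1hatMatrix u v
  symm := by intro u v; fin_cases u <;> fin_cases v <;> rfl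
  loopless := by intro v; fin_cases v <;> rfl

/-- The multiplicity matrix of `Ĥ₂` (vertices `a₁ = 0`, `b₁ = 1`, `v = 2`,
`a₂ = 3`, `b₂ = 4`). -/
def H2hatMatrix : Matrix (Fin 5) (Fin 5) ℕ :=
  !![0, 2, 1, 0, 0;
     2, 0, 1, 0, 0;
     1, 1, 0, 1, 1;
     0, 0, 1, 0, 2;
     0, 0, 1, 2, 0]

/-- The multigraph `Ĥ₂`: two digons `a₁b₁`, `a₂b₂`, and single edges
`a₁v`, `b₁v`, `a₂v`, `b₂v`. -/
def H2hat : Multigraph (Fin 5) where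
  m u v := H2hatMatrix u v
  symm := by intro u v; fin_cases u <;> fin_cases v <;> rfl
  loopless := by intro v; fin_cases v <;> rfl

/-! ## Subdivisions of `K₄` and their type -/

/-- The complete graph on four vertices. -/
def K4 : SimpleGraph (Fin 4) := ⊤

/-- The set of edges of `K₄` that are subdivided at least once in the subdivision
witnessed by `S` (i.e. replaced by a path with at least two edges). -/
def subdividedEdges {W : Type} {H : SimpleGraph W}
    (S : MultiSubdivision K4.toMultigraph H 0) : Set (Sym2 (Fin 4)) :=
  {e : Sym2 (Fin 4) | ∃ (u v : Fin 4) (i : Fin (K4.toMultigraph.m u v)),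
    e = s(u, v) ∧ 2 ≤ (S.path u v i).length}

/-! ## Adding a twin -/

/-- The graph obtained from `G` by adding a twin of `v`: a new vertex, non-adjacent
to `v`, whose neighborhood is exactly `N(v)`. -/
def addTwin {V : Type} (G : SimpleGraph V) (v : V) : SimpleGraph (V ⊕ Unit) :=
  SimpleGraph.fromRel (fun a b =>
    match a, b with
    | Sum.inl u, Sum.inl w => G.Adj u w
    | Sum.inr _, Sum.inl u => G.Adj v u
    | _, _ => False)

/-! ## The construction of Burling and Pawlik et al. -/

/-- A graph-stable set pair: a graph together with a collection of sets of vertices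
(intended: stable sets). -/
structure GSPair : Type 1 where
  V : Type
  G : SimpleGraph V
  S : Set (Set V)

namespace GSPair

/-- The vertex type of `next P`: the original vertices, the vertices `(s, u)` of the
copy `H_s` of the graph for each `s ∈ 𝒮`, and the new vertices `v_{s,t}`. -/
abbrev nextVertex (P : GSPair) : Type :=
  P.V ⊕ ((↥P.S × P.V) ⊕ (↥P.S × ↥P.S))

/-- The adjacency generator for the graph of `next P`. -/
def nextRel (P : GSPair) : P.nextVertex → P.nextVertex → Prop
  | Sum.inl u, Sum.inl v => P.G.Adj u v
  | Sum.inr (Sum.inl (s, u)), Sum.inr (Sum.inl (t, v)) => s = t ∧ P.G.Adj u v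
  | Sum.inr (Sum.inr (s, t)), Sum.inr (Sum.inl (s', v)) => s = s' ∧ v ∈ (t : Set P.V)
  | _, _ => False

/-- The procedure `next`: add a disjoint copy `H_s` of the graph for each `s ∈ 𝒮`, a
vertex `v_{s,t}` whose neighborhood is exactly the copy of `t` inside `H_s` for all
`s, t ∈ 𝒮`, and take as new collection of stable sets all `s ∪ t_s` and
`s ∪ {v_{s,t}}`. -/
def next (P : GSPair) : GSPair where
  V := P.nextVertex
  G := SimpleGraph.fromRel P.nextRel
  S := {A : Set P.nextVertex | ∃ s t : ↥P.S,
    A = (Sum.inl '' (s : Set P.V) : Set P.nextVertex) ∪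
        ((fun u : P.V => (Sum.inr (Sum.inl (s, u)) : P.nextVertex)) '' (t : Set P.V)) ∨
    A = (Sum.inl '' (s : Set P.V) : Set P.nextVertex) ∪ {Sum.inr (Sum.inr (s, t))}}

/-- The starting pair: a single vertex, with the single stable set consisting of
that vertex. -/
def base : GSPair := ⟨PUnit, ⊥, {Set.univ}⟩

/-- `P` is an induced subgraph-stable set pair of `Q`. -/
def IsInducedSubpair (P Q : GSPair) : Prop :=
  ∃ f : P.V ↪ Q.V, (∀ u v : P.V, P.G.Adj u v ↔ Q.G.Adj (f u) (f v)) ∧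
    ∀ A ∈ P.S, ∃ B ∈ Q.S, A = f ⁻¹' B

/-- A graph-stable set pair is constructible if it is an induced subgraph-stable set
pair of some iterate of `next` on the starting pair. -/
def Constructible (P : GSPair) : Prop :=
  ∃ i : ℕ, IsInducedSubpair P (next^[i] base)

end GSPair


/-!
Keep a representation `F` of `G₁` and draw the tree `T = G₂ - p` in a small window at the top
right corner `κ` of `F v`. Being a corner, `κ` lies on no other frame; it lies outside the region
of every frame meeting `F v`, and outside the common region of any two intersecting frames, since
otherwise `F v` would be nested in that common region. These are closed conditions on finitely
many frames, so they hold near `κ`, and new frames placed there interfere with no old one.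

Root `T` at a vertex that is not a leaf, if there is one, and give each vertex a box whose
vertical extent is nested in its parent's and disjoint from its siblings', and whose horizontal
extent starts inside the parent's box and ends to its right, deeper descendants lying entirely
to the right. Then the frames of parent and child cross, all other pairs of boxes are separated,
and no frame is nested in another. Pushing the leaves across the right side of `F v` makes their
frames, and only theirs, meet `F v`: these are the edges at the pivot.
-/

open Topology

namespace Box

variable {B C : Box} {z : ℝ × ℝ}

lemma frame_subset_region (B : Box) : B.frame ⊆ B.region := fun _ hz => hz.1

lemma leftSide_subset_frame (B : Box) : B.leftSide ⊆ B.frame := fun _ ⟨h, hy1, hy2⟩ =>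
  ⟨⟨h.ge, h ▸ B.hx.le, hy1, hy2⟩, Or.inl h⟩

lemma rightSide_subset_frame (B : Box) : B.rightSide ⊆ B.frame := fun _ ⟨h, hy1, hy2⟩ =>
  ⟨⟨h ▸ B.hx.le, h.le, hy1, hy2⟩, Or.inr (Or.inl h)⟩

lemma topSide_subset_frame (B : Box) : B.topSide ⊆ B.frame := fun _ ⟨h, hx1, hx2⟩ =>
  ⟨⟨hx1, hx2, h ▸ B.hy.le, h.le⟩, Or.inr (Or.inr (Or.inr h))⟩

lemma bottomSide_subset_frame (B : Box) : B.bottomSide ⊆ B.frame := fun _ ⟨h, hx1, hx2⟩ =>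
  ⟨⟨hx1, hx2, h.ge, h ▸ B.hy.le⟩, Or.inr (Or.inr (Or.inl h))⟩

lemma corners_subset_frame (B : Box) : B.corners ⊆ B.frame := by
  have := B.hx.le
  have := B.hy.le
  rintro z (rfl | rfl | rfl | rfl)
  all_goals exact ⟨by simp only [region, Set.mem_ofPred_eq]; grind, by simp⟩

lemma mem_sides_of_mem_frame (hz : z ∈ B.frame) :
    z ∈ B.leftSide ∨ z ∈ B.rightSide ∨ z ∈ B.topSide ∨ z ∈ B.bottomSide := by
  obtain ⟨⟨h1, h2, h3, h4⟩, h | h | h | h⟩ := hz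
  exacts [Or.inl ⟨h, h3, h4⟩, Or.inr (Or.inl ⟨h, h3, h4⟩), Or.inr (Or.inr (Or.inr ⟨h, h1, h2⟩)),
    Or.inr (Or.inr (Or.inl ⟨h, h1, h2⟩))]

lemma bottomLeft_mem_frame (B : Box) : (B.x1, B.y1) ∈ B.frame :=
  B.corners_subset_frame (by simp [corners])

lemma region_eq_Icc (B : Box) : B.region = Set.Icc (B.x1, B.y1) (B.x2, B.y2) := by
  ext
  simp only [region, Set.mem_ofPred_eq, Set.mem_Icc, Prod.le_def]
  tauto

lemma isClosed_region (B : Box) : IsClosed B.region :=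
  B.region_eq_Icc ▸ isClosed_Icc

lemma isClosed_frame (B : Box) : IsClosed B.frame := by
  have : B.frame = B.region ∩
      {z | (z.1 - B.x1) * (z.1 - B.x2) * (z.2 - B.y1) * (z.2 - B.y2) = 0} := by
    ext
    simp only [frame, Set.mem_ofPred_eq, Set.mem_inter_iff, mul_eq_zero, sub_eq_zero, or_assoc]
  rw [this]
  exact B.isClosed_region.inter (isClosed_eq (by fun_prop) continuous_const)

/-- The left side of `C` lies in the interior of `B`. -/
def LeftInside (C B : Box) : Prop :=
  B.x1 < C.x1 ∧ C.x1 < B.x2 ∧ B.y1 < C.y1 ∧ C.y2 < B.y2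

/-- The right side of `B` cuts through `C`, whose left side lies inside `B`. -/
def Crosses (B C : Box) : Prop :=
  C.LeftInside B ∧ B.x2 < C.x2

def Apart (B C : Box) : Prop :=
  B.x2 < C.x1 ∨ C.x2 < B.x1 ∨ B.y2 < C.y1 ∨ C.y2 < B.y1

/-- Conditions (1)–(3) of a restricted frame representation for the ordered pair `(B, C)`. -/
def IsRestrictedPair (B C : Box) : Prop :=
  B.corners ∩ C.frame = ∅ ∧ B.leftSide ∩ C.frame = ∅ ∧
    ((B.rightSide ∩ C.frame).Nonempty →
      (B.rightSide ∩ C.topSide).Nonempty ∧ (B.rightSide ∩ C.bottomSide).Nonempty)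

lemma isRestrictedPair_of_frame_inter_eq_empty (h : B.frame ∩ C.frame = ∅) :
    IsRestrictedPair B C := by
  refine ⟨Set.subset_eq_empty (Set.inter_subset_inter_left _ B.corners_subset_frame) h,
    Set.subset_eq_empty (Set.inter_subset_inter_left _ B.leftSide_subset_frame) h, ?_⟩
  rintro ⟨z, hB, hC⟩
  exact absurd h (Set.nonempty_iff_ne_empty.1 ⟨z, B.rightSide_subset_frame hB, hC⟩)

lemma LeftInside.frame_inter_eq_empty (h : C.LeftInside B) (hx : C.x2 < B.x2) :
    B.frame ∩ C.frame = ∅ := by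
  refine Set.eq_empty_iff_forall_notMem.2 fun z hz => ?_
  simp only [LeftInside, Set.mem_inter_iff, frame, region, Set.mem_ofPred_eq] at h hz
  grind

lemma Crosses.frame_inter_nonempty (h : B.Crosses C) : (B.frame ∩ C.frame).Nonempty := by
  obtain ⟨⟨h1, h2, h3, h4⟩, h5⟩ := h
  have := C.hy
  exact ⟨(B.x2, C.y2), B.rightSide_subset_frame ⟨rfl, by linarith, h4.le⟩,
    C.topSide_subset_frame ⟨rfl, h2.le, h5.le⟩⟩

lemma Crosses.isRestrictedPair (h : B.Crosses C) : IsRestrictedPair B C := by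
  obtain ⟨⟨h1, h2, h3, h4⟩, h5⟩ := h
  have := C.hy
  refine ⟨Set.eq_empty_iff_forall_notMem.2 fun z hz => ?_,
    Set.eq_empty_iff_forall_notMem.2 fun z hz => ?_, fun _ => ?_⟩
  · simp only [Set.mem_inter_iff, corners, frame, region, Set.mem_insert_iff,
      Set.mem_singleton_iff, Set.mem_ofPred_eq] at hz
    grind
  · simp only [Set.mem_inter_iff, leftSide, frame, region, Set.mem_ofPred_eq] at hz
    grind
  · exact ⟨⟨(B.x2, C.y2), ⟨rfl, by linarith, h4.le⟩, ⟨rfl, h2.le, h5.le⟩⟩,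
      ⟨(B.x2, C.y1), ⟨rfl, h3.le, by linarith⟩, ⟨rfl, h2.le, h5.le⟩⟩⟩

lemma Crosses.isRestrictedPair_symm (h : B.Crosses C) : IsRestrictedPair C B := by
  unfold Crosses LeftInside at h
  have := C.hy
  refine ⟨Set.eq_empty_iff_forall_notMem.2 fun z hz => ?_,
    Set.eq_empty_iff_forall_notMem.2 fun z hz => ?_, fun ⟨z, hz⟩ => ?_⟩
  · simp only [Set.mem_inter_iff, corners, frame, region, Set.mem_insert_iff,
      Set.mem_singleton_iff, Set.mem_ofPred_eq] at hz
    grind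
  · simp only [Set.mem_inter_iff, leftSide, frame, region, Set.mem_ofPred_eq] at hz
    grind
  · simp only [Set.mem_inter_iff, rightSide, frame, region, Set.mem_ofPred_eq] at hz
    grind

lemma Crosses.not_frame_subset_region (h : B.Crosses C) : ¬ C.frame ⊆ B.region := fun hs =>
  (hs (C.rightSide_subset_frame (show (C.x2, C.y1) ∈ C.rightSide from ⟨rfl, le_rfl, C.hy.le⟩))
    ).2.1.not_gt h.2

lemma Crosses.not_frame_subset_region_symm (h : B.Crosses C) : ¬ B.frame ⊆ C.region := fun hs =>
  (hs B.bottomLeft_mem_frame).1.not_gt h.1.1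

lemma Apart.symm (h : B.Apart C) : C.Apart B := by
  unfold Apart at *
  tauto

lemma Apart.frame_inter_eq_empty (h : B.Apart C) : B.frame ∩ C.frame = ∅ := by
  refine Set.eq_empty_iff_forall_notMem.2 fun z hz => ?_
  simp only [Apart, Set.mem_inter_iff, frame, region, Set.mem_ofPred_eq] at h hz
  grind

lemma Apart.not_frame_subset_region (h : B.Apart C) : ¬ B.frame ⊆ C.region := fun hs => by
  have h1 := hs B.bottomLeft_mem_frame
  have h2 := hs (B.corners_subset_frame (by simp [corners]) : (B.x2, B.y2) ∈ B.frame)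
  simp only [Apart, region, Set.mem_ofPred_eq] at h h1 h2
  grind

end Box

namespace IsFrameRepresentation

variable {V : Type} {G : SimpleGraph V} {F : V → Box}

lemma isRestrictedPair (hF : IsFrameRepresentation G F) {u v : V} (h : u ≠ v) :
    (F u).IsRestrictedPair (F v) :=
  ⟨hF.corner_free u v h, hF.left_free u v h, hF.right_cross u v h⟩

lemma of_isRestrictedPair
    (hadj : ∀ u v, u ≠ v → (G.Adj u v ↔ ((F u).frame ∩ (F v).frame).Nonempty))
    (hpair : ∀ u v, u ≠ v → (F u).IsRestrictedPair (F v))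
    (hnest : ∀ u v w, u ≠ v → w ≠ u → w ≠ v → ((F u).frame ∩ (F v).frame).Nonempty →
      ¬ (F w).frame ⊆ (F u).region ∩ (F v).region) :
    IsFrameRepresentation G F :=
  ⟨hadj, fun u v h => (hpair u v h).1, fun u v h => (hpair u v h).2.1,
    fun u v h => (hpair u v h).2.2, hnest⟩

end IsFrameRepresentation

section CrossesOrApart

variable {V : Type} {G : SimpleGraph V} {F : V → Box}

theorem pairwise_not_frame_subset_region_of_crosses_or_apart
    (hadj : ∀ u w, G.Adj u w → (F u).Crosses (F w) ∨ (F w).Crosses (F u))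
    (hnadj : ∀ u w, u ≠ w → ¬ G.Adj u w → (F u).Apart (F w)) :
    Pairwise fun u w => ¬ (F u).frame ⊆ (F w).region := by
  intro u w huw
  by_cases h : G.Adj u w
  · rcases hadj u w h with h | h
    exacts [h.not_frame_subset_region_symm, h.not_frame_subset_region]
  · exact (hnadj u w huw h).not_frame_subset_region

theorem isFrameRepresentation_of_crosses_or_apart
    (hadj : ∀ u w, G.Adj u w → (F u).Crosses (F w) ∨ (F w).Crosses (F u))
    (hnadj : ∀ u w, u ≠ w → ¬ G.Adj u w → (F u).Apart (F w)) :
    IsFrameRepresentation G F := by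
  refine .of_isRestrictedPair (fun u w huw => ⟨fun h => ?_, fun h => ?_⟩) (fun u w huw => ?_)
    fun u w x _ hxu _ _ hs => pairwise_not_frame_subset_region_of_crosses_or_apart hadj hnadj
      hxu (hs.trans Set.inter_subset_left)
  · rcases hadj u w h with h | h
    exacts [h.frame_inter_nonempty, Set.inter_comm _ _ ▸ h.frame_inter_nonempty]
  · by_contra hn
    exact Set.nonempty_iff_ne_empty.1 h (hnadj u w huw hn).frame_inter_eq_empty
  · by_cases h : G.Adj u w
    · rcases hadj u w h with h | h
      exacts [h.isRestrictedPair, h.isRestrictedPair_symm]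
    · exact Box.isRestrictedPair_of_frame_inter_eq_empty (hnadj u w huw h).frame_inter_eq_empty

end CrossesOrApart

namespace Box

def map (e₁ e₂ : ℝ ≃o ℝ) (B : Box) : Box :=
  ⟨e₁ B.x1, e₁ B.x2, e₂ B.y1, e₂ B.y2, e₁.strictMono B.hx, e₂.strictMono B.hy⟩

def pointMap (e₁ e₂ : ℝ ≃o ℝ) : (ℝ × ℝ) ≃ (ℝ × ℝ) :=
  e₁.toEquiv.prodCongr e₂.toEquiv

variable (e₁ e₂ : ℝ ≃o ℝ) (B : Box)

lemma map_region : (B.map e₁ e₂).region = pointMap e₁ e₂ '' B.region := by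
  rw [Equiv.image_eq_preimage_symm]
  ext z
  simp [pointMap, region, map, OrderIso.le_symm_apply, OrderIso.symm_apply_le]

lemma map_frame : (B.map e₁ e₂).frame = pointMap e₁ e₂ '' B.frame := by
  rw [Equiv.image_eq_preimage_symm]
  ext z
  simp [pointMap, frame, region, map, OrderIso.le_symm_apply,
    OrderIso.symm_apply_le, OrderIso.symm_apply_eq]

lemma map_leftSide : (B.map e₁ e₂).leftSide = pointMap e₁ e₂ '' B.leftSide := by
  rw [Equiv.image_eq_preimage_symm]
  ext z
  simp [pointMap, leftSide, map, OrderIso.le_symm_apply,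
    OrderIso.symm_apply_le, OrderIso.symm_apply_eq]

lemma map_rightSide : (B.map e₁ e₂).rightSide = pointMap e₁ e₂ '' B.rightSide := by
  rw [Equiv.image_eq_preimage_symm]
  ext z
  simp [pointMap, rightSide, map, OrderIso.le_symm_apply,
    OrderIso.symm_apply_le, OrderIso.symm_apply_eq]

lemma map_topSide : (B.map e₁ e₂).topSide = pointMap e₁ e₂ '' B.topSide := by
  rw [Equiv.image_eq_preimage_symm]
  ext z
  simp [pointMap, topSide, map, OrderIso.le_symm_apply,
    OrderIso.symm_apply_le, OrderIso.symm_apply_eq]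

lemma map_bottomSide : (B.map e₁ e₂).bottomSide = pointMap e₁ e₂ '' B.bottomSide := by
  rw [Equiv.image_eq_preimage_symm]
  ext z
  simp [pointMap, bottomSide, map, OrderIso.le_symm_apply,
    OrderIso.symm_apply_le, OrderIso.symm_apply_eq]

lemma map_corners : (B.map e₁ e₂).corners = pointMap e₁ e₂ '' B.corners := by
  rw [Equiv.image_eq_preimage_symm]
  ext z
  simp [pointMap, corners, map, Prod.ext_iff, OrderIso.symm_apply_eq]

end Box

section Map

variable {V : Type} {G : SimpleGraph V} {F : V → Box} (e₁ e₂ : ℝ ≃o ℝ)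

theorem IsFrameRepresentation.map (hF : IsFrameRepresentation G F) :
    IsFrameRepresentation G fun u => (F u).map e₁ e₂ := by
  obtain ⟨h1, h2, h3, h4, h5⟩ := hF
  constructor <;>
  simpa only [Box.map_frame, Box.map_region, Box.map_corners, Box.map_leftSide,
    Box.map_rightSide, Box.map_topSide, Box.map_bottomSide, Set.image_nonempty, Set.image_eq_empty,
    ← Set.image_inter (Box.pointMap e₁ e₂).injective,
    Set.image_subset_image_iff (Box.pointMap e₁ e₂).injective]

theorem Pairwise.map_not_frame_subset_region
    (h : Pairwise fun u w => ¬ (F u).frame ⊆ (F w).region) :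
    Pairwise fun u w => ¬ ((F u).map e₁ e₂).frame ⊆ ((F w).map e₁ e₂).region := by
  simpa only [Box.map_frame, Box.map_region,
    Set.image_subset_image_iff (Box.pointMap e₁ e₂).injective] using h

end Map

/-! ### Free points near the top right corner of a frame -/

def Box.topRight (B : Box) : ℝ × ℝ := (B.x2, B.y2)

def IsFreePoint {V : Type} (F : V → Box) (v : V) (z : ℝ × ℝ) : Prop :=
  (∀ u, u ≠ v → z ∉ (F u).frame) ∧
    ∀ a b, a ≠ b → ((F a).frame ∩ (F b).frame).Nonempty → z ∉ (F a).region ∩ (F b).region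

namespace IsFrameRepresentation

variable {V : Type} {G : SimpleGraph V} {F : V → Box}

lemma horizontal_sides_disjoint (hF : IsFrameRepresentation G F) {u w : V} (huw : u ≠ w)
    {z : ℝ × ℝ} (hu : z ∈ (F u).topSide ∨ z ∈ (F u).bottomSide)
    (hw : z ∈ (F w).topSide ∨ z ∈ (F w).bottomSide) : False := by
  wlog h : (F w).x1 ≤ (F u).x1 generalizing u w
  · exact this huw.symm hw hu (le_of_not_ge h)
  have := (F w).hy
  simp only [Box.topSide, Box.bottomSide, Set.mem_ofPred_eq] at hu hw
  refine Set.eq_empty_iff_forall_notMem.1 (hF.corner_free u w huw) ((F u).x1, z.2) ⟨?_, ?_⟩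
  · rcases hu with h' | h' <;> simp [Box.corners, h'.1]
  · simp only [Box.frame, Box.region, Set.mem_ofPred_eq]
    grind

lemma topRight_notMem_frame (hF : IsFrameRepresentation G F) {u v : V} (huv : u ≠ v) :
    (F v).topRight ∉ (F u).frame := fun h =>
  Set.eq_empty_iff_forall_notMem.1 (hF.corner_free v u huv.symm) _
    ⟨by simp [Box.corners, Box.topRight], h⟩

lemma topRight_notMem_region (hF : IsFrameRepresentation G F) {u v : V} (huv : u ≠ v)
    (h : ((F u).frame ∩ (F v).frame).Nonempty) : (F v).topRight ∉ (F u).region := by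
  intro hk
  have hnf := hF.topRight_notMem_frame huv
  simp only [Box.topRight, Box.frame, Box.region, Set.mem_ofPred_eq] at hk hnf
  have hx : (F v).x2 < (F u).x2 := lt_of_le_of_ne hk.2.1 fun h => hnf ⟨hk, by tauto⟩
  have hy : (F v).y2 < (F u).y2 := lt_of_le_of_ne hk.2.2.2 fun h => hnf ⟨hk, by tauto⟩
  obtain ⟨z, hzu, hzv⟩ := h
  rcases Box.mem_sides_of_mem_frame hzu with hL | hR | hTB
  · exact Set.eq_empty_iff_forall_notMem.1 (hF.left_free u v huv) z ⟨hL, hzv⟩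
  · obtain ⟨⟨t, htr, htt⟩, -⟩ := hF.right_cross u v huv ⟨z, hR, hzv⟩
    exact hx.not_ge (htr.1 ▸ htt.2.2)
  rcases Box.mem_sides_of_mem_frame hzv with hL | hR | hTB'
  · exact Set.eq_empty_iff_forall_notMem.1 (hF.left_free v u huv.symm) z ⟨hL, hzu⟩
  · obtain ⟨⟨t, htr, htt⟩, -⟩ := hF.right_cross v u huv.symm ⟨z, hR, hzu⟩
    exact hy.not_ge (htt.1 ▸ htr.2.2)
  · exact hF.horizontal_sides_disjoint huv hTB hTB'

lemma frame_subset_region_of_topRight_mem (hF : IsFrameRepresentation G F) {a v : V}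
    (hav : a ≠ v) (hk : (F v).topRight ∈ (F a).region) : (F v).frame ⊆ (F a).region := by
  have hnf := hF.topRight_notMem_frame hav
  have hdisj : (F a).frame ∩ (F v).frame = ∅ :=
    Set.not_nonempty_iff_eq_empty.1 fun h => hF.topRight_notMem_region hav h hk
  have := (F v).hx
  have := (F v).hy
  simp only [Box.topRight, Box.frame, Box.region, Set.mem_ofPred_eq] at hk hnf
  -- otherwise the top side of `F v` would meet the left side of `F a`
  have hx : (F a).x1 ≤ (F v).x1 := by
    by_contra! h
    exact Set.eq_empty_iff_forall_notMem.1 hdisj ((F a).x1, (F v).y2)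
      ⟨(F a).leftSide_subset_frame ⟨rfl, by grind, by grind⟩,
        (F v).topSide_subset_frame ⟨rfl, h.le, by grind⟩⟩
  -- otherwise the right side of `F v` would meet the bottom side of `F a`
  have hy : (F a).y1 ≤ (F v).y1 := by
    by_contra! h
    exact Set.eq_empty_iff_forall_notMem.1 hdisj ((F v).x2, (F a).y1)
      ⟨(F a).bottomSide_subset_frame ⟨rfl, by grind, by grind⟩,
        (F v).rightSide_subset_frame ⟨rfl, h.le, by grind⟩⟩
  rintro z ⟨⟨h1, h2, h3, h4⟩, -⟩
  exact ⟨by linarith, by linarith, by linarith, by linarith⟩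

lemma topRight_notMem_region_inter (hF : IsFrameRepresentation G F) {a b : V} (v : V)
    (hab : a ≠ b) (h : ((F a).frame ∩ (F b).frame).Nonempty) :
    (F v).topRight ∉ (F a).region ∩ (F b).region := by
  rintro ⟨ha, hb⟩
  by_cases hav : a = v
  · subst hav
    exact hF.topRight_notMem_region hab.symm (Set.inter_comm _ _ ▸ h) hb
  by_cases hbv : b = v
  · subst hbv
    exact hF.topRight_notMem_region hab h ha
  exact hF.not_nested a b v hab (Ne.symm hav) (Ne.symm hbv) h fun z hz =>
    ⟨hF.frame_subset_region_of_topRight_mem hav ha hz,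
      hF.frame_subset_region_of_topRight_mem hbv hb hz⟩

theorem eventually_isFreePoint [Finite V] (hF : IsFrameRepresentation G F) (v : V) :
    ∀ᶠ z in 𝓝 (F v).topRight, IsFreePoint F v z := by
  refine (Filter.eventually_all.2 fun u => ?_).and
    (Filter.eventually_all.2 fun a => Filter.eventually_all.2 fun b => ?_)
  · by_cases huv : u = v
    · exact Filter.Eventually.of_forall fun _ h => absurd huv h
    · exact Filter.mem_of_superset
        ((F u).isClosed_frame.isOpen_compl.mem_nhds (hF.topRight_notMem_frame huv))
        fun _ hz _ => hz
  · by_cases hab : a ≠ b ∧ ((F a).frame ∩ (F b).frame).Nonempty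
    · exact Filter.mem_of_superset
        (((F a).isClosed_region.inter (F b).isClosed_region).isOpen_compl.mem_nhds
          (hF.topRight_notMem_region_inter v hab.1 hab.2)) fun _ hz _ _ => hz
    · exact Filter.Eventually.of_forall fun _ h h' => absurd ⟨h, h'⟩ hab

end IsFrameRepresentation

/-- The order isomorphisms `e₁, e₂` send `(0, 0)` to the top right corner of `F v`, the square
`[-1, 0] × [-1, 0]` into the region of `F v`, and the rectangle `[-1, 1] × [-1, 0]` into the
free points. -/
structure IsFreeWindow {V : Type} (F : V → Box) (v : V) (e₁ e₂ : ℝ ≃o ℝ) : Prop where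
  map_zero_fst : e₁ 0 = (F v).x2
  map_zero_snd : e₂ 0 = (F v).y2
  x1_le : (F v).x1 ≤ e₁ (-1)
  y1_le : (F v).y1 ≤ e₂ (-1)
  isFreePoint : ∀ z : ℝ × ℝ, e₁ (-1) ≤ z.1 → z.1 ≤ e₁ 1 → e₂ (-1) ≤ z.2 → z.2 ≤ e₂ 0 →
    IsFreePoint F v z

theorem IsFrameRepresentation.exists_isFreeWindow {V : Type} {G : SimpleGraph V}
    {F : V → Box} [Finite V] (hF : IsFrameRepresentation G F) (v : V) :
    ∃ e₁ e₂ : ℝ ≃o ℝ, IsFreeWindow F v e₁ e₂ := by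
  obtain ⟨ε, hε, hfree⟩ := Metric.eventually_nhds_iff.1 (hF.eventually_isFreePoint v)
  set δ := min (ε / 2) (min ((F v).x2 - (F v).x1) ((F v).y2 - (F v).y1))
  have hδ : 0 < δ := lt_min (half_pos hε) (lt_min (sub_pos.2 (F v).hx) (sub_pos.2 (F v).hy))
  have hδε : δ ≤ ε / 2 := min_le_left _ _
  have hδx : δ ≤ (F v).x2 - (F v).x1 := (min_le_right _ _).trans (min_le_left _ _)
  have hδy : δ ≤ (F v).y2 - (F v).y1 := (min_le_right _ _).trans (min_le_right _ _)
  let e (c : ℝ) : ℝ ≃o ℝ := (OrderIso.mulLeft₀ δ hδ).trans (OrderIso.addLeft c)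
  have he (c t : ℝ) : e c t = c + δ * t := rfl
  refine ⟨e (F v).x2, e (F v).y2, by simp [he], by simp [he], by simp [he]; linarith,
    by simp [he]; linarith, fun z h1 h2 h3 h4 => hfree ?_⟩
  simp only [he] at h1 h2 h3 h4
  rw [Prod.dist_eq, max_lt_iff, Real.dist_eq, Real.dist_eq, abs_sub_lt_iff, abs_sub_lt_iff]
  simp only [Box.topRight]
  refine ⟨⟨?_, ?_⟩, ?_, ?_⟩ <;> linarith

/-! ### Rooted trees -/

namespace SimpleGraph

variable {ι : Type} {T : SimpleGraph ι}

/-- `T` rooted at `root`, given by parent pointers; the value of `parent root` is irrelevant. -/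
structure Rooting (T : SimpleGraph ι) where
  root : ι
  parent : ι → ι
  depth : ι → ℕ
  depth_eq_zero : ∀ {u}, depth u = 0 ↔ u = root
  depth_parent : ∀ {u}, u ≠ root → depth u = depth (parent u) + 1
  adj_iff : ∀ {u w}, T.Adj u w ↔ (w ≠ root ∧ parent w = u) ∨ (u ≠ root ∧ parent u = w)

namespace IsTree

variable (hT : T.IsTree) (r : ι)

noncomputable def pathTo (u : ι) : T.Walk u r :=
  (hT.existsUnique_path u r).choose

lemma isPath_pathTo (u : ι) : (hT.pathTo r u).IsPath :=
  (hT.existsUnique_path u r).choose_spec.1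

variable {r} in
lemma eq_pathTo {u : ι} {q : T.Walk u r} (hq : q.IsPath) : q = hT.pathTo r u :=
  (hT.existsUnique_path u r).choose_spec.2 q hq

lemma pathTo_self : hT.pathTo r r = .nil :=
  (hT.eq_pathTo .nil).symm

lemma exists_pathTo_eq_cons {u : ι} (hu : u ≠ r) :
    ∃ (w : ι) (h : T.Adj u w), hT.pathTo r u = .cons h (hT.pathTo r w) := by
  obtain ⟨w, h, q, hq⟩ := Walk.exists_eq_cons_of_ne hu (hT.pathTo r u)
  have hqp : q.IsPath := (hq ▸ hT.isPath_pathTo r u).of_cons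
  exact ⟨w, h, hq.trans (congrArg _ (hT.eq_pathTo hqp))⟩

lemma length_pathTo_le_of_mem_support {x w : ι} (hx : x ∈ (hT.pathTo r w).support) :
    (hT.pathTo r x).length ≤ (hT.pathTo r w).length := by
  classical
  rw [← hT.eq_pathTo ((hT.isPath_pathTo r w).dropUntil hx)]
  exact Walk.length_dropUntil_le_length _ hx

lemma snd_pathTo_eq_of_notMem_support {a b : ι} (hab : T.Adj a b)
    (hb : b ∉ (hT.pathTo r a).support) : b ≠ r ∧ (hT.pathTo r b).snd = a := by
  refine ⟨fun hbr => hb (hbr ▸ Walk.end_mem_support _), ?_⟩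
  rw [← hT.eq_pathTo ((Walk.cons_isPath_iff hab.symm _).2 ⟨hT.isPath_pathTo r a, hb⟩),
    Walk.snd_cons]

lemma adj_iff_snd_pathTo {u w : ι} :
    T.Adj u w ↔ (w ≠ r ∧ (hT.pathTo r w).snd = u) ∨ (u ≠ r ∧ (hT.pathTo r u).snd = w) := by
  refine ⟨fun h => ?_, ?_⟩
  · by_cases hw : w ∈ (hT.pathTo r u).support
    · by_cases hu : u ∈ (hT.pathTo r w).support
      · -- then `u` and `w` lie on each other's paths to `r`, which is impossible
        exfalso
        have hwr : w ≠ r := by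
          rintro rfl
          simp only [hT.pathTo_self, Walk.support_nil, List.mem_singleton] at hu
          exact h.ne hu
        have h1 := hT.length_pathTo_le_of_mem_support r hu
        have h2 := hT.length_pathTo_le_of_mem_support r hw
        obtain ⟨x, hx, e⟩ := hT.exists_pathTo_eq_cons r hwr
        rw [e, Walk.support_cons, List.mem_cons] at hu
        rcases hu with rfl | hu
        · exact h.ne rfl
        have h3 := hT.length_pathTo_le_of_mem_support r hu
        rw [e, Walk.length_cons] at h1 h2
        omega
      · exact Or.inr (hT.snd_pathTo_eq_of_notMem_support r h.symm hu)
    · exact Or.inl (hT.snd_pathTo_eq_of_notMem_support r h hw)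
  · rintro (⟨hw, rfl⟩ | ⟨hu, rfl⟩)
    · obtain ⟨x, h, e⟩ := hT.exists_pathTo_eq_cons r hw
      simpa [e] using h.symm
    · obtain ⟨x, h, e⟩ := hT.exists_pathTo_eq_cons r hu
      simpa [e] using h

noncomputable def rooting : T.Rooting where
  root := r
  parent u := (hT.pathTo r u).snd
  depth u := (hT.pathTo r u).length
  depth_eq_zero {u} := ⟨Walk.eq_of_length_eq_zero, by rintro rfl; rw [hT.pathTo_self]; rfl⟩
  depth_parent {u} hu := by
    obtain ⟨w, h, e⟩ := hT.exists_pathTo_eq_cons r hu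
    rw [e, Walk.snd_cons, Walk.length_cons]
  adj_iff := hT.adj_iff_snd_pathTo r

end IsTree

end SimpleGraph

namespace SimpleGraph.Rooting

variable {ι : Type} {T : SimpleGraph ι} (R : T.Rooting)

/-- `u` is a child of `q`. -/
def IsParent (q u : ι) : Prop :=
  u ≠ R.root ∧ R.parent u = q

variable {R}

lemma adj_iff_isParent {u w : ι} : T.Adj u w ↔ R.IsParent u w ∨ R.IsParent w u :=
  R.adj_iff

lemma IsParent.depth_eq {q u : ι} (h : R.IsParent q u) : R.depth u = R.depth q + 1 :=
  h.2 ▸ R.depth_parent h.1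

lemma isParent_parent {u : ι} (hu : u ≠ R.root) : R.IsParent (R.parent u) u :=
  ⟨hu, rfl⟩

open Relation in
theorem eq_or_transGen_or_exists_siblings (u w : ι) :
    u = w ∨ TransGen R.IsParent u w ∨ TransGen R.IsParent w u ∨
      ∃ q a b, a ≠ b ∧ R.IsParent q a ∧ R.IsParent q b ∧
        ReflTransGen R.IsParent a u ∧ ReflTransGen R.IsParent b w := by
  induction hn : R.depth u + R.depth w using Nat.strong_induction_on generalizing u w with
  | _ n ih =>
  wlog h : R.depth u ≤ R.depth w generalizing u w
  · rcases this w u (by omega) (by omega) with h | h | h | ⟨q, a, b, hab, ha, hb, hau, hbw⟩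
    exacts [Or.inl h.symm, Or.inr (Or.inr (Or.inl h)), Or.inr (Or.inl h),
      Or.inr (Or.inr (Or.inr ⟨q, b, a, hab.symm, hb, ha, hbw, hau⟩))]
  by_cases hw : w = R.root
  · have := R.depth_eq_zero.2 hw
    exact Or.inl ((R.depth_eq_zero.1 (by omega)).trans hw.symm)
  have hq := isParent_parent hw
  rcases ih _ (by have := hq.depth_eq; omega) u (R.parent w) rfl with
    rfl | h | h | ⟨q, a, b, hab, ha, hb, hau, hbw⟩
  · exact Or.inr (Or.inl (.single hq))
  · exact Or.inr (Or.inl (h.tail hq))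
  · obtain ⟨c, hc, hcu⟩ := TransGen.head'_iff.1 h
    by_cases hcw : c = w
    · subst hcw
      rcases reflTransGen_iff_eq_or_transGen.1 hcu with rfl | h
      exacts [Or.inl rfl, Or.inr (Or.inr (Or.inl h))]
    · exact Or.inr (Or.inr (Or.inr ⟨_, c, w, hcw, hc, hq, hcu, .refl⟩))
  · exact Or.inr (Or.inr (Or.inr ⟨q, a, b, hab, ha, hb, hau, hbw.tail hq⟩))

lemma not_isLeaf_of_isParent [Finite ι] {u c : ι} (hu : u ≠ R.root) (h : R.IsParent u c) :
    ¬ IsLeaf T u := by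
  have hne : R.parent u ≠ c := fun e => by
    have := h.depth_eq
    have := (isParent_parent hu).depth_eq
    rw [e] at this
    omega
  have : 1 < (T.neighborSet u).ncard := (Set.one_lt_ncard_iff (Set.toFinite _)).2
    ⟨R.parent u, c, adj_iff_isParent.2 (Or.inr (isParent_parent hu)),
      adj_iff_isParent.2 (Or.inl h), hne⟩
  exact fun hl => by rw [IsLeaf] at hl; omega

end SimpleGraph.Rooting

theorem SimpleGraph.IsTree.exists_rooting_forall_isLeaf_of_isLeaf_root {ι : Type} {T : SimpleGraph ι}
    (hT : T.IsTree) : ∃ R : T.Rooting, IsLeaf T R.root → ∀ u, IsLeaf T u := by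
  by_cases h : ∀ u, IsLeaf T u
  · exact ⟨hT.rooting hT.connected.nonempty.some, fun _ => h⟩
  · push Not at h
    obtain ⟨r, hr⟩ := h
    exact ⟨hT.rooting r, fun h => absurd h hr⟩

/-! ### Drawing a rooted tree -/

noncomputable def xSeq (k : ℕ) : ℝ := -1 / (k + 2)

lemma xSeq_strictMono : StrictMono xSeq := fun i j h => by
  have : (i : ℝ) < j := by exact_mod_cast h
  unfold xSeq
  rw [neg_div, neg_div, neg_lt_neg_iff]
  exact one_div_lt_one_div_of_lt (by positivity) (by linarith)

lemma xSeq_neg (k : ℕ) : xSeq k < 0 :=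
  div_neg_of_neg_of_pos (by norm_num) (by positivity)

lemma neg_one_lt_xSeq (k : ℕ) : -1 < xSeq k := by
  unfold xSeq
  rw [neg_div, neg_lt_neg_iff, div_lt_one (by positivity)]
  linarith [k.cast_nonneg (α := ℝ)]

/-- The middle third of the `i`-th of `n` equal parts of the interval `I`. -/
noncomputable def slot (I : ℝ × ℝ) (n i : ℕ) : ℝ × ℝ :=
  (I.1 + (I.2 - I.1) * (3 * i + 1) / (3 * n), I.1 + (I.2 - I.1) * (3 * i + 2) / (3 * n))

lemma slot_bounds {I : ℝ × ℝ} {n i : ℕ} (hI : I.1 < I.2) (hi : i < n) :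
    I.1 < (slot I n i).1 ∧ (slot I n i).1 < (slot I n i).2 ∧ (slot I n i).2 < I.2 := by
  have hi' : (i : ℝ) + 1 ≤ n := by exact_mod_cast hi
  have hn : (0 : ℝ) < 3 * n := by linarith [i.cast_nonneg (α := ℝ)]
  have hd : 0 < I.2 - I.1 := sub_pos.2 hI
  refine ⟨?_, ?_, ?_⟩ <;> simp only [slot]
  · have : 0 < (I.2 - I.1) * (3 * i + 1) / (3 * n) := by positivity
    linarith
  · gcongr
    linarith
  · have : (I.2 - I.1) * (3 * i + 2) / (3 * n) < I.2 - I.1 := by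
      rw [div_lt_iff₀ hn]
      nlinarith
    linarith

lemma slot_snd_lt_slot_fst {I : ℝ × ℝ} {n i j : ℕ} (hI : I.1 < I.2) (hij : i < j) (hj : j < n) :
    (slot I n i).2 < (slot I n j).1 := by
  have hij' : (i : ℝ) + 1 ≤ j := by exact_mod_cast hij
  have hn : (0 : ℝ) < 3 * n := by
    have : (0 : ℝ) < n := by exact_mod_cast (Nat.zero_le i).trans_lt (hij.trans hj)
    linarith
  have := div_lt_div_of_pos_right
    (mul_lt_mul_of_pos_left (by linarith : (3 * i + 2 : ℝ) < 3 * j + 1) (sub_pos.2 hI)) hn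
  simp only [slot]
  linarith

namespace SimpleGraph.Rooting

open Relation

variable {ι : Type} {T : SimpleGraph ι} (R : T.Rooting) {n : ℕ} (e : ι ↪ Fin n)

/-- Only meaningful for `d = R.depth u`, see `yInterval`. -/
noncomputable def yIntervalAux : ℕ → ι → ℝ × ℝ
  | 0, _ => (-2 / 3, -1 / 3)
  | d + 1, u => slot (yIntervalAux d (R.parent u)) n (e u)

noncomputable def yInterval (u : ι) : ℝ × ℝ :=
  R.yIntervalAux e (R.depth u) u

variable {R e}

lemma yInterval_root : R.yInterval e R.root = (-2 / 3, -1 / 3) := by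
  rw [yInterval, R.depth_eq_zero.2 rfl, yIntervalAux]

lemma yInterval_of_ne_root {u : ι} (hu : u ≠ R.root) :
    R.yInterval e u = slot (R.yInterval e (R.parent u)) n (e u) := by
  rw [yInterval, R.depth_parent hu, yIntervalAux, yInterval]

lemma yInterval_bounds (u : ι) :
    -1 < (R.yInterval e u).1 ∧ (R.yInterval e u).1 < (R.yInterval e u).2 ∧
      (R.yInterval e u).2 < 0 := by
  induction hd : R.depth u using Nat.strong_induction_on generalizing u with
  | _ d ih =>
  by_cases hu : u = R.root
  · subst hu
    rw [yInterval_root]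
    norm_num
  · obtain ⟨h1, h2, h3⟩ := ih _ (by rw [← hd, R.depth_parent hu]; omega) (R.parent u) rfl
    have := slot_bounds h2 (e u).isLt
    rw [yInterval_of_ne_root hu]
    exact ⟨by linarith, this.2.1, by linarith⟩

lemma IsParent.yInterval_lt {q u : ι} (h : R.IsParent q u) :
    (R.yInterval e q).1 < (R.yInterval e u).1 ∧ (R.yInterval e u).2 < (R.yInterval e q).2 := by
  have := slot_bounds (yInterval_bounds (R := R) (e := e) q).2.1 (e u).isLt
  rw [yInterval_of_ne_root h.1, h.2]
  exact ⟨this.1, this.2.2⟩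

lemma yInterval_le_of_reflTransGen {a u : ι} (h : ReflTransGen R.IsParent a u) :
    (R.yInterval e a).1 ≤ (R.yInterval e u).1 ∧ (R.yInterval e u).2 ≤ (R.yInterval e a).2 := by
  induction h with
  | refl => exact ⟨le_rfl, le_rfl⟩
  | tail _ h ih =>
    have := h.yInterval_lt (e := e)
    exact ⟨ih.1.trans this.1.le, this.2.le.trans ih.2⟩

lemma yInterval_disjoint_of_isParent {q a b : ι} (hab : a ≠ b) (ha : R.IsParent q a)
    (hb : R.IsParent q b) :
    (R.yInterval e a).2 < (R.yInterval e b).1 ∨ (R.yInterval e b).2 < (R.yInterval e a).1 := by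
  have hq := (yInterval_bounds (R := R) (e := e) q).2.1
  rw [yInterval_of_ne_root ha.1, yInterval_of_ne_root hb.1, ha.2, hb.2]
  rcases lt_or_gt_of_ne (e.injective.ne hab) with h | h
  exacts [Or.inl (slot_snd_lt_slot_fst hq h (e b).isLt),
    Or.inr (slot_snd_lt_slot_fst hq h (e a).isLt)]

lemma depth_le_of_reflTransGen {a u : ι} (h : ReflTransGen R.IsParent a u) :
    R.depth a ≤ R.depth u := by
  induction h with
  | refl => exact le_rfl
  | tail _ h ih => exact ih.trans (h.depth_eq ▸ Nat.le_succ _)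

variable (R e) (ℓ : ι → Prop) [DecidablePred ℓ]

/-- Since `xSeq` is increasing, a child's box starts inside its parent's box and ends to its right
(when `ℓ` is closed under children), while the boxes of deeper descendants start right of it.
The vertices in `ℓ` are pushed across the line `x = 0`. -/
noncomputable def layoutBox (u : ι) : Box where
  x1 := xSeq (3 * R.depth u)
  x2 := (if ℓ u then 1 else 0) + xSeq (3 * R.depth u + 4)
  y1 := (R.yInterval e u).1
  y2 := (R.yInterval e u).2
  hx := by
    have := xSeq_strictMono (show 3 * R.depth u < 3 * R.depth u + 4 by omega)
    split_ifs <;> linarith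
  hy := (yInterval_bounds u).2.1

variable {R ℓ e}

lemma IsParent.layoutBox_crosses (hℓ : ∀ {u c}, R.IsParent u c → ℓ u → ℓ c) {q u : ι}
    (h : R.IsParent q u) : (R.layoutBox e ℓ q).Crosses (R.layoutBox e ℓ u) := by
  have hy := h.yInterval_lt (e := e)
  have hd := h.depth_eq
  have h1 := xSeq_strictMono (show 3 * R.depth q < 3 * R.depth u by omega)
  have h2 := xSeq_strictMono (show 3 * R.depth u < 3 * R.depth q + 4 by omega)
  have h3 := xSeq_strictMono (show 3 * R.depth q + 4 < 3 * R.depth u + 4 by omega)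
  have := hℓ h
  refine ⟨⟨h1, ?_, hy.1, hy.2⟩, ?_⟩ <;> simp only [layoutBox] <;> split_ifs <;> grind

lemma layoutBox_apart_of_transGen (hℓ₁ : ∀ {u c}, u ≠ R.root → R.IsParent u c → ¬ ℓ u)
    (hℓ₂ : ∀ {u c}, R.IsParent u c → ℓ u → ℓ c) {u w : ι} (h : TransGen R.IsParent u w)
    (hnadj : ¬ T.Adj u w) :
    (R.layoutBox e ℓ u).Apart (R.layoutBox e ℓ w) := by
  obtain ⟨c, huc, hcw⟩ := TransGen.head'_iff.1 h
  obtain ⟨d, hcd, hdw⟩ : ∃ d, R.IsParent c d ∧ ReflTransGen R.IsParent d w := by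
    rcases reflTransGen_iff_eq_or_transGen.1 hcw with rfl | h'
    · exact absurd (adj_iff_isParent.2 (Or.inl huc)) hnadj
    · exact TransGen.head'_iff.1 h'
  have hu : ¬ ℓ u := fun hu => hℓ₁ huc.1 hcd (hℓ₂ huc hu)
  have := huc.depth_eq
  have := hcd.depth_eq
  have := depth_le_of_reflTransGen hdw
  left
  simp only [layoutBox, if_neg hu, zero_add]
  exact xSeq_strictMono (by omega)

lemma layoutBox_apart (hℓ₁ : ∀ {u c}, u ≠ R.root → R.IsParent u c → ¬ ℓ u)
    (hℓ₂ : ∀ {u c}, R.IsParent u c → ℓ u → ℓ c) {u w : ι} (huw : u ≠ w) (hnadj : ¬ T.Adj u w) :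
    (R.layoutBox e ℓ u).Apart (R.layoutBox e ℓ w) := by
  rcases R.eq_or_transGen_or_exists_siblings u w with h | h | h | ⟨q, a, b, hab, ha, hb, hau, hbw⟩
  · exact absurd h huw
  · exact layoutBox_apart_of_transGen hℓ₁ hℓ₂ h hnadj
  · exact (layoutBox_apart_of_transGen hℓ₁ hℓ₂ h fun h' => hnadj h'.symm).symm
  · have := yInterval_disjoint_of_isParent (e := e) hab ha hb
    have := yInterval_le_of_reflTransGen (e := e) hau
    have := yInterval_le_of_reflTransGen (e := e) hbw
    simp only [Box.Apart, layoutBox]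
    grind

end SimpleGraph.Rooting

/-- A frame representation of `T` in the square `(-1, 1) × (-1, 0)` whose frames all start left
of the line `x = 0`, the frames crossing that line being exactly those of the leaves. -/
structure IsPivotLayout {ι : Type} (T : SimpleGraph ι) (N : ι → Box) : Prop where
  isFrameRepresentation : IsFrameRepresentation T N
  pairwise_not_frame_subset_region : Pairwise fun u w => ¬ (N u).frame ⊆ (N w).region
  neg_one_lt_x1 : ∀ u, -1 < (N u).x1
  x1_neg : ∀ u, (N u).x1 < 0
  x2_lt_one : ∀ u, (N u).x2 < 1
  neg_one_lt_y1 : ∀ u, -1 < (N u).y1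
  y2_neg : ∀ u, (N u).y2 < 0
  x2_pos_iff : ∀ u, 0 < (N u).x2 ↔ IsLeaf T u
  x2_ne_zero : ∀ u, (N u).x2 ≠ 0

theorem SimpleGraph.IsTree.exists_isPivotLayout {ι : Type} [Finite ι] {T : SimpleGraph ι}
    (hT : T.IsTree) : ∃ N : ι → Box, IsPivotLayout T N := by
  classical
  obtain ⟨R, hR⟩ := hT.exists_rooting_forall_isLeaf_of_isLeaf_root
  obtain ⟨n, ⟨e⟩⟩ := Finite.exists_equiv_fin ι
  have hℓ₁ {u c : ι} : u ≠ R.root → R.IsParent u c → ¬ IsLeaf T u := R.not_isLeaf_of_isParent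
  have hℓ₂ {u c : ι} (h : R.IsParent u c) (hu : IsLeaf T u) : IsLeaf T c := by
    by_cases hur : u = R.root
    · exact hR (hur ▸ hu) c
    · exact absurd hu (hℓ₁ hur h)
  set N := R.layoutBox e.toEmbedding (IsLeaf T)
  have hadj (u w : ι) (h : T.Adj u w) : (N u).Crosses (N w) ∨ (N w).Crosses (N u) :=
    (SimpleGraph.Rooting.adj_iff_isParent.1 h).imp
      (fun h => h.layoutBox_crosses hℓ₂) fun h => h.layoutBox_crosses hℓ₂
  have hnadj (u w : ι) (huw : u ≠ w) (h : ¬ T.Adj u w) : (N u).Apart (N w) :=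
    SimpleGraph.Rooting.layoutBox_apart hℓ₁ hℓ₂ huw h
  refine ⟨N, isFrameRepresentation_of_crosses_or_apart hadj hnadj,
    pairwise_not_frame_subset_region_of_crosses_or_apart hadj hnadj, fun u => neg_one_lt_xSeq _,
    fun u => xSeq_neg _, fun u => ?_, fun u => (SimpleGraph.Rooting.yInterval_bounds u).1,
    fun u => (SimpleGraph.Rooting.yInterval_bounds u).2.2, fun u => ?_, fun u => ?_⟩ <;>
  · have := xSeq_neg (3 * R.depth u + 4)
    have := neg_one_lt_xSeq (3 * R.depth u + 4)
    simp only [N, SimpleGraph.Rooting.layoutBox]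
    split_ifs <;> simp_all <;> linarith

/-! ### Gluing -/

section Glue

variable {V₁ V₂ : Type} {G₁ : SimpleGraph V₁} {G₂ : SimpleGraph V₂} {v : V₁} {p : V₂}

@[simp] lemma glueAt_adj_inl_inl {a b : V₁} :
    (glueAt G₁ G₂ v p).Adj (.inl a) (.inl b) ↔ G₁.Adj a b := by
  simp only [glueAt, SimpleGraph.fromRel_adj]
  exact ⟨fun ⟨_, h⟩ => h.elim id .symm, fun h => ⟨by simpa using h.ne, .inl h⟩⟩

@[simp] lemma glueAt_adj_inl_inr {a : V₁} {w : {x // x ≠ p}} :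
    (glueAt G₁ G₂ v p).Adj (.inl a) (.inr w) ↔ a = v ∧ G₂.Adj p w := by
  simp [glueAt]

@[simp] lemma glueAt_adj_inr_inr {u w : {x // x ≠ p}} :
    (glueAt G₁ G₂ v p).Adj (.inr u) (.inr w) ↔ G₂.Adj u w := by
  simp only [glueAt, SimpleGraph.fromRel_adj]
  exact ⟨fun ⟨_, h⟩ => h.elim id .symm, fun h => ⟨by simpa [Subtype.ext_iff] using h.ne, .inl h⟩⟩

variable {F : V₁ → Box} {N : {x // x ≠ p} → Box}

lemma crosses_or_frame_inter_eq_empty (hfree : ∀ w, ∀ z ∈ (N w).region, IsFreePoint F v z)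
    (hinside : ∀ w, (N w).LeftInside (F v)) (hne : ∀ w, (N w).x2 ≠ (F v).x2) (a : V₁)
    (w : {x // x ≠ p}) :
    (a = v ∧ (F a).Crosses (N w)) ∨
      ((a = v → (N w).x2 < (F v).x2) ∧ (F a).frame ∩ (N w).frame = ∅) := by
  by_cases ha : a = v
  · subst ha
    rcases (hne w).lt_or_gt with h | h
    exacts [Or.inr ⟨fun _ => h, (hinside w).frame_inter_eq_empty h⟩, Or.inl ⟨rfl, hinside w, h⟩]
  · exact Or.inr ⟨fun h => absurd h ha, Set.eq_empty_iff_forall_notMem.2 fun z ⟨hza, hzw⟩ =>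
      (hfree w z ((N w).frame_subset_region hzw)).1 a ha hza⟩

lemma frame_inter_nonempty_iff_of_free (hfree : ∀ w, ∀ z ∈ (N w).region, IsFreePoint F v z)
    (hinside : ∀ w, (N w).LeftInside (F v)) (hne : ∀ w, (N w).x2 ≠ (F v).x2)
    (hpivot : ∀ w : {x // x ≠ p}, G₂.Adj p w ↔ (F v).x2 < (N w).x2) (a : V₁) (w : {x // x ≠ p}) :
    ((F a).frame ∩ (N w).frame).Nonempty ↔ a = v ∧ G₂.Adj p w := by
  rw [hpivot]
  rcases crosses_or_frame_inter_eq_empty hfree hinside hne a w with ⟨rfl, h⟩ | ⟨h, h'⟩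
  · exact iff_of_true h.frame_inter_nonempty ⟨rfl, h.2⟩
  · rw [h']
    exact iff_of_false Set.not_nonempty_empty fun ⟨ha, hx⟩ => (h ha).not_gt hx

theorem isFrameRepresentation_glueAt (hF : IsFrameRepresentation G₁ F)
    (hN : IsFrameRepresentation (G₂.induce {x | x ≠ p}) N)
    (hNsep : Pairwise fun u w => ¬ (N u).frame ⊆ (N w).region)
    (hfree : ∀ w, ∀ z ∈ (N w).region, IsFreePoint F v z)
    (hinside : ∀ w, (N w).LeftInside (F v)) (hne : ∀ w, (N w).x2 ≠ (F v).x2)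
    (hpivot : ∀ w : {x // x ≠ p}, G₂.Adj p w ↔ (F v).x2 < (N w).x2) :
    IsFrameRepresentation (glueAt G₁ G₂ v p) (Sum.elim F N) := by
  have hmeet := frame_inter_nonempty_iff_of_free hfree hinside hne hpivot
  have hpair (a : V₁) (w : {x // x ≠ p}) :
      (F a).IsRestrictedPair (N w) ∧ (N w).IsRestrictedPair (F a) := by
    rcases crosses_or_frame_inter_eq_empty hfree hinside hne a w with ⟨-, h⟩ | ⟨-, h⟩
    · exact ⟨h.isRestrictedPair, h.isRestrictedPair_symm⟩
    · exact ⟨Box.isRestrictedPair_of_frame_inter_eq_empty h,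
        Box.isRestrictedPair_of_frame_inter_eq_empty (Set.inter_comm _ _ ▸ h)⟩
  -- `F v` starts left of every `N w`; any other old frame avoids the regions `(N w).region`
  have hold (c : V₁) (w : {x // x ≠ p}) : ¬ (F c).frame ⊆ (N w).region := fun hs => by
    have hz := hs (F c).bottomLeft_mem_frame
    by_cases hc : c = v
    · exact hz.1.not_gt (hc ▸ (hinside w).1)
    · exact (hfree w _ hz).1 c hc (F c).bottomLeft_mem_frame
  refine .of_isRestrictedPair ?_ ?_ ?_
  · rintro (a | u) (b | w) hab
    · simpa using hF.adj_iff a b fun h => hab (congrArg _ h)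
    · simpa using (hmeet a w).symm
    · simpa [SimpleGraph.adj_comm, Set.inter_comm] using (hmeet b u).symm
    · simpa using hN.adj_iff u w fun h => hab (congrArg _ h)
  · rintro (a | u) (b | w) hab
    · exact hF.isRestrictedPair fun h => hab (congrArg _ h)
    · exact (hpair a w).1
    · exact (hpair b u).2
    · exact hN.isRestrictedPair fun h => hab (congrArg _ h)
  · rintro A B (c | x) hAB hWA hWB hAB' hs
    · rcases A with a | u
      · rcases B with b | w
        · exact hF.not_nested a b c (fun h => hAB (congrArg _ h)) (fun h => hWA (congrArg _ h))
            (fun h => hWB (congrArg _ h)) hAB' hs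
        · exact hold c w (hs.trans Set.inter_subset_right)
      · exact hold c u (hs.trans Set.inter_subset_left)
    · rcases A with a | u
      · rcases B with b | w
        · exact (hfree x _ ((N x).frame_subset_region (N x).bottomLeft_mem_frame)).2 a b
            (fun h => hAB (congrArg _ h)) hAB' (hs (N x).bottomLeft_mem_frame)
        · exact hNsep (fun h => hWB (congrArg _ h)) (hs.trans Set.inter_subset_right)
      · exact hNsep (fun h => hWA (congrArg _ h)) (hs.trans Set.inter_subset_left)

end Glue

theorem IsFreeWindow.isFrameRepresentation_glueAt {V₁ V₂ : Type} {G₁ : SimpleGraph V₁}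
    {G₂ : SimpleGraph V₂} {F : V₁ → Box} {v : V₁} {p : V₂} {N : {x // x ≠ p} → Box}
    {e₁ e₂ : ℝ ≃o ℝ} (hw : IsFreeWindow F v e₁ e₂) (hF : IsFrameRepresentation G₁ F)
    (hN : IsPivotLayout (G₂.induce {x | x ≠ p}) N)
    (hpivot : ∀ w : {x // x ≠ p}, G₂.Adj p w ↔ IsLeaf (G₂.induce {x | x ≠ p}) w) :
    IsFrameRepresentation (glueAt G₁ G₂ v p) (Sum.elim F fun w => (N w).map e₁ e₂) := by
  refine _root_.isFrameRepresentation_glueAt hF (hN.isFrameRepresentation.map e₁ e₂)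
    (hN.pairwise_not_frame_subset_region.map_not_frame_subset_region e₁ e₂)
    (fun w z ⟨h1, h2, h3, h4⟩ => hw.isFreePoint z ?_ ?_ ?_ ?_) (fun w => ⟨?_, ?_, ?_, ?_⟩)
    (fun w => hw.map_zero_fst ▸ e₁.injective.ne (hN.x2_ne_zero w)) fun w => ?_
  · exact (e₁.monotone (hN.neg_one_lt_x1 w).le).trans h1
  · exact h2.trans (e₁.monotone (hN.x2_lt_one w).le)
  · exact (e₂.monotone (hN.neg_one_lt_y1 w).le).trans h3
  · exact h4.trans (e₂.monotone (hN.y2_neg w).le)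
  · exact hw.x1_le.trans_lt (e₁.strictMono (hN.neg_one_lt_x1 w))
  · exact hw.map_zero_fst ▸ e₁.strictMono (hN.x1_neg w)
  · exact hw.y1_le.trans_lt (e₂.strictMono (hN.neg_one_lt_y1 w))
  · exact hw.map_zero_snd ▸ e₂.strictMono (hN.y2_neg w)
  · rw [hpivot, ← hN.x2_pos_iff, ← hw.map_zero_fst]
    exact e₁.lt_iff_lt.symm

/-- Let `G₁` be a restricted frame graph, let `G₂` be a chandelier
with pivot `p`, and let `v` be a vertex of `G₁`. Then the graph obtained from the
disjoint union of `G₁` and `G₂` by identifying `v` with `p` is a restricted frame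
graph. -/
theorem glue_chandelier_isRestrictedFrameGraph
    {V₁ V₂ : Type} [Fintype V₁] [Fintype V₂]
    (G₁ : SimpleGraph V₁) (G₂ : SimpleGraph V₂) (v : V₁) (p : V₂)
    (h₁ : IsRestrictedFrameGraph G₁) (h₂ : IsChandelierWithPivot G₂ p) :
    IsRestrictedFrameGraph (glueAt G₁ G₂ v p) := by
  obtain ⟨F, hF⟩ := h₁
  obtain ⟨N, hN⟩ := h₂.1.exists_isPivotLayout
  obtain ⟨e₁, e₂, hw⟩ := hF.exists_isFreeWindow v
  exact ⟨_, hw.isFrameRepresentation_glueAt hF hN h₂.2⟩
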